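/- Let a, b > 0 and define G = mes₂{(φ, ψ) ∈ (-π, π]² : a² sin²(φ/2) + b² sin²(ψ/2) ≤ 1}. Then min(2π, 2√2/a) · min(2π, 2√2/b) ≤ G ≤ min(2π, 2π/a) · min(2π, 2π/b). -/

import Mathlib

open Real MeasureTheory Set

/-! Since `|φ| / π ≤ |sin (φ / 2)| ≤ |φ| / 2` on `(-π, π]`, the region is squeezed between two
boxes: `|a φ| ≤ √2` and `|b ψ| ≤ √2` make each of the two terms at most `1 / 2`, while each term
being at most `1` forces `|a φ| ≤ π` and `|b ψ| ≤ π`. -/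

lemma abs_div_pi_le_abs_sin_half {x : ℝ} (hx : |x| ≤ π) : |x| / π ≤ |sin (x / 2)| := by
  have hjordan := mul_abs_le_abs_sin (x := x / 2) (by rw [abs_div, abs_two]; linarith)
  rwa [abs_div, abs_two, div_mul_div_comm, mul_comm, mul_div_mul_right _ _ two_ne_zero] at hjordan

lemma abs_sin_half_le (x : ℝ) : |sin (x / 2)| ≤ |x| / 2 := by
  simpa only [abs_div, abs_two] using abs_sin_le_abs (x := x / 2)

lemma sq_mul_sin_half_sq_le_half {a x : ℝ} (h : |a * x| ≤ √2) :
    a ^ 2 * sin (x / 2) ^ 2 ≤ 1 / 2 := by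
  have hbound : |a * sin (x / 2)| ≤ √2 / 2 := by
    rw [abs_mul]
    calc |a| * |sin (x / 2)| ≤ |a| * (|x| / 2) := by gcongr; exact abs_sin_half_le x
      _ = |a * x| / 2 := by rw [abs_mul]; ring
      _ ≤ √2 / 2 := by gcongr
  calc a ^ 2 * sin (x / 2) ^ 2 = |a * sin (x / 2)| ^ 2 := by rw [sq_abs]; ring
    _ ≤ (√2 / 2) ^ 2 := by gcongr
    _ = 1 / 2 := by rw [div_pow, sq_sqrt zero_le_two]; norm_num

lemma abs_mul_le_pi_of_sq_mul_sin_half_sq_le_one {a x : ℝ} (hx : |x| ≤ π)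
    (h : a ^ 2 * sin (x / 2) ^ 2 ≤ 1) : |a * x| ≤ π := by
  have hsin : |a * sin (x / 2)| ≤ 1 := by
    rw [← sq_le_one_iff_abs_le_one, mul_pow]; exact h
  calc |a * x| = π * (|a| * (|x| / π)) := by rw [abs_mul]; field_simp
    _ ≤ π * (|a| * |sin (x / 2)|) := by gcongr; exact abs_div_pi_le_abs_sin_half hx
    _ ≤ π := by rw [← abs_mul]; nlinarith [pi_pos]

section HalfWidth

variable {a k x : ℝ}

lemma mem_Ioc_pi_and_abs_mul_le_of_mem_Ioc_min (ha : 0 < a)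
    (hx : x ∈ Ioc (-min π (k / a)) (min π (k / a))) : x ∈ Ioc (-π) π ∧ |a * x| ≤ k := by
  obtain ⟨hlo, hhi⟩ := hx
  refine ⟨⟨(neg_le_neg (min_le_left _ _)).trans_lt hlo, hhi.trans (min_le_left _ _)⟩, ?_⟩
  have : |x| ≤ k / a :=
    abs_le.2 ⟨(neg_le_neg (min_le_right _ _)).trans hlo.le, hhi.trans (min_le_right _ _)⟩
  rwa [abs_mul, abs_of_pos ha, ← le_div_iff₀' ha]

lemma mem_Icc_min_of_abs_mul_le (ha : 0 < a) (hx : |x| ≤ π) (hax : |a * x| ≤ k) :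
    x ∈ Icc (-min π (k / a)) (min π (k / a)) := by
  rw [abs_mul, abs_of_pos ha, ← le_div_iff₀' ha] at hax
  exact abs_le.1 (le_min hx hax)

end HalfWidth

lemma two_mul_min_pi_div (k a : ℝ) : 2 * min π (k / a) = min (2 * π) (2 * k / a) := by
  rw [mul_min_of_nonneg _ _ zero_le_two, mul_div_assoc]

lemma volume_real_Ioc_prod_Ioc (r s : ℝ) (hr : 0 ≤ r) (hs : 0 ≤ s) :
    volume.real (Ioc (-r) r ×ˢ Ioc (-s) s) = 2 * r * (2 * s) := by
  rw [Measure.volume_eq_prod, measureReal_prod_prod, Real.volume_real_Ioc_of_le (by linarith),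
    Real.volume_real_Ioc_of_le (by linarith)]
  ring

lemma volume_real_Icc_prod_Icc (r s : ℝ) (hr : 0 ≤ r) (hs : 0 ≤ s) :
    volume.real (Icc (-r) r ×ˢ Icc (-s) s) = 2 * r * (2 * s) := by
  rw [Measure.volume_eq_prod, measureReal_prod_prod, Real.volume_real_Icc_of_le (by linarith),
    Real.volume_real_Icc_of_le (by linarith)]
  ring

def capRegion (a b : ℝ) : Set (ℝ × ℝ) :=
  {p | p.1 ∈ Ioc (-π) π ∧ p.2 ∈ Ioc (-π) π ∧
    a ^ 2 * sin (p.1 / 2) ^ 2 + b ^ 2 * sin (p.2 / 2) ^ 2 ≤ 1}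

section CapRegion

variable {a b : ℝ}

lemma Ioc_prod_Ioc_subset_capRegion (ha : 0 < a) (hb : 0 < b) :
    Ioc (-min π (√2 / a)) (min π (√2 / a)) ×ˢ Ioc (-min π (√2 / b)) (min π (√2 / b)) ⊆
      capRegion a b := by
  rintro ⟨x, y⟩ ⟨hx, hy⟩
  obtain ⟨hx, hax⟩ := mem_Ioc_pi_and_abs_mul_le_of_mem_Ioc_min ha hx
  obtain ⟨hy, hby⟩ := mem_Ioc_pi_and_abs_mul_le_of_mem_Ioc_min hb hy
  have := sq_mul_sin_half_sq_le_half hax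
  have := sq_mul_sin_half_sq_le_half hby
  exact ⟨hx, hy, by linarith⟩

lemma capRegion_subset_Icc_prod_Icc (ha : 0 < a) (hb : 0 < b) :
    capRegion a b ⊆
      Icc (-min π (π / a)) (min π (π / a)) ×ˢ Icc (-min π (π / b)) (min π (π / b)) := by
  rintro ⟨x, y⟩ ⟨hx, hy, hsum⟩
  have hx' : |x| ≤ π := abs_le.2 ⟨hx.1.le, hx.2⟩
  have hy' : |y| ≤ π := abs_le.2 ⟨hy.1.le, hy.2⟩
  have : 0 ≤ a ^ 2 * sin (x / 2) ^ 2 := by positivity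
  have : 0 ≤ b ^ 2 * sin (y / 2) ^ 2 := by positivity
  have hax : |a * x| ≤ π := abs_mul_le_pi_of_sq_mul_sin_half_sq_le_one hx' (by linarith)
  have hby : |b * y| ≤ π := abs_mul_le_pi_of_sq_mul_sin_half_sq_le_one hy' (by linarith)
  exact ⟨mem_Icc_min_of_abs_mul_le ha hx' hax, mem_Icc_min_of_abs_mul_le hb hy' hby⟩

end CapRegion

theorem cap_measure_min_bounds (a b : ℝ) (ha : 0 < a) (hb : 0 < b) :
    min (2 * π) (2 * Real.sqrt 2 / a) * min (2 * π) (2 * Real.sqrt 2 / b) ≤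
      (volume {p : ℝ × ℝ | p.1 ∈ Set.Ioc (-π) π ∧ p.2 ∈ Set.Ioc (-π) π ∧
        a ^ 2 * Real.sin (p.1 / 2) ^ 2 + b ^ 2 * Real.sin (p.2 / 2) ^ 2 ≤ 1}).toReal ∧
    (volume {p : ℝ × ℝ | p.1 ∈ Set.Ioc (-π) π ∧ p.2 ∈ Set.Ioc (-π) π ∧
        a ^ 2 * Real.sin (p.1 / 2) ^ 2 + b ^ 2 * Real.sin (p.2 / 2) ^ 2 ≤ 1}).toReal ≤
      min (2 * π) (2 * π / a) * min (2 * π) (2 * π / b) := by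
  change _ ≤ volume.real (capRegion a b) ∧ volume.real (capRegion a b) ≤ _
  have hupper := capRegion_subset_Icc_prod_Icc ha hb
  have hbox_finite : volume (Icc (-min π (π / a)) (min π (π / a)) ×ˢ
      Icc (-min π (π / b)) (min π (π / b))) ≠ ⊤ :=
    (isCompact_Icc.prod isCompact_Icc).measure_ne_top
  have hfinite : volume (capRegion a b) ≠ ⊤ := measure_ne_top_of_subset hupper hbox_finite
  simp only [← two_mul_min_pi_div]
  constructor
  · rw [← volume_real_Ioc_prod_Ioc _ _ (by positivity) (by positivity)]
    exact measureReal_mono (Ioc_prod_Ioc_subset_capRegion ha hb) hfinite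
  · rw [← volume_real_Icc_prod_Icc _ _ (by positivity) (by positivity)]
    exact measureReal_mono hupper hbox_finite
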